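/- arXiv:2504.20793 — 2 statements merged into one kernel-verified Lean document; each statement's English description precedes it below -/
import Mathlib

section
/- Let H = GL_2(ℝ), ν ∈ ℂ^2, η ∈ (ℤ/2ℤ)^2, and suppose ν_2 − ν_1 = k_0 for some k_0 ∈ ℕ. Let ε_H^{2,1} be the differential operator on C^∞(H) given by the infinitesimal right regular action of E_{2,1}. Then (ε_H^{2,1})^{k_0} maps τ_{η,ν} to τ_{η',ν'} intertwining the left regular H-action, where η' = (η_1+[k_0], η_2+[k_0]) and ν' = (ν_1 + k_0, ν_2 − k_0); in particular, for f ∈ τ_{η,ν} the function (ε_H^{2,1})^{k_0} f is right-invariant under the unipotent upper triangular subgroup. -/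
open Matrix

attribute [local instance] Matrix.normedAddCommGroup Matrix.normedSpace

/-- `f : GL_m(ℝ) → ℂ` lies in the principal series `τ_{η,ν}` (normalized induction from the
upper triangular Borel): `f(g·man) = ∏ᵢ |dᵢ|^{−νᵢ−ρᵢ}_{ηᵢ} f(g)`, `ρᵢ = (m−1−2i)/2` (0-based),
`|x|^ν_η = sgn(x)^η |x|^ν`. For `m = 2` this is `f(g·diag(d₀,d₁)·n) = |d₀|^{−ν₀−½}_{η₀}
|d₁|^{−ν₁+½}_{η₁} f(g)`. -/
def PS (m : ℕ) (η : Fin m → ℕ) (ν : Fin m → ℂ)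
    (f : Matrix (Fin m) (Fin m) ℝ → ℂ) : Prop :=
  ∀ (g u : Matrix (Fin m) (Fin m) ℝ) (d : Fin m → ℝ),
    (∀ i, d i ≠ 0) → u.BlockTriangular id → (∀ i, u i i = 1) →
    f (g * (Matrix.diagonal d * u))
      = (∏ i, (Real.sign (d i) : ℂ) ^ (η i)
          * ((|d i| : ℝ) : ℂ) ^ (-(ν i) - ((m : ℂ) - 1 - 2 * (i : ℕ)) / 2)) * f g

/-- `ε_H^{2,1} f(g) = d/dt|₀ f(g·exp(tE_{2,1})) = Σ_k g_{k,2} ∂f/∂g_{k,1}(g)` on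
`C^∞(GL_2(ℝ))` (0-based indices). -/
noncomputable def epsH (f : Matrix (Fin 2) (Fin 2) ℝ → ℂ)
    (g : Matrix (Fin 2) (Fin 2) ℝ) : ℂ :=
  ∑ k, (g k 1 : ℂ) * fderiv ℝ f g (Matrix.single k 0 1)

namespace Stmt14Aux

noncomputable instance instNACG_CLM : NormedAddCommGroup (Matrix (Fin 2) (Fin 2) ℝ →L[ℝ] ℂ) :=
  ContinuousLinearMap.toNormedAddCommGroup
noncomputable instance instNS_CLM : NormedSpace ℝ (Matrix (Fin 2) (Fin 2) ℝ →L[ℝ] ℂ) :=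
  ContinuousLinearMap.toNormedSpace

abbrev M2 : Type := Matrix (Fin 2) (Fin 2) ℝ

noncomputable def mr (a : M2) : M2 →L[ℝ] M2 :=
  LinearMap.toContinuousLinearMap (LinearMap.mulRight ℝ a)

@[simp] lemma mr_apply (a x : M2) : mr a x = x * a := rfl

noncomputable def ml (a : M2) : M2 →L[ℝ] M2 :=
  LinearMap.toContinuousLinearMap (LinearMap.mulLeft ℝ a)

@[simp] lemma ml_apply (a x : M2) : ml a x = a * x := rfl

def Em : M2 := Matrix.single 1 0 1
def Fm : M2 := Matrix.single 0 1 1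
noncomputable def Hm : M2 := Matrix.diagonal ![1, -1]

lemma epsH_eq (u : M2 → ℂ) (g : M2) : epsH u g = fderiv ℝ u g (g * Em) := by
  have h : g * Em = ∑ k : Fin 2, g k 1 • Matrix.single k 0 (1:ℝ) := by
    ext i j
    fin_cases i <;> fin_cases j <;>
      simp [Em, Matrix.mul_apply, Fin.sum_univ_two, Matrix.single, Matrix.sum_apply]
  rw [epsH, h, map_sum]
  refine Finset.sum_congr rfl fun k _ => ?_
  rw [_root_.map_smul]
  simp [Complex.real_smul]

lemma contDiff_epsH {u : M2 → ℂ} (hu : ContDiff ℝ (⊤ : ℕ∞) u) : ContDiff ℝ (⊤ : ℕ∞) (epsH u) := by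
  have h1 : ContDiff ℝ (⊤ : ℕ∞) (fderiv ℝ u) := hu.fderiv_right (by simp)
  have h2 : ContDiff ℝ (⊤ : ℕ∞) (fun g : M2 => g * Em) := (mr Em).contDiff
  have h3 : ContDiff ℝ (⊤ : ℕ∞) (fun g : M2 => fderiv ℝ u g (g * Em)) := h1.clm_apply h2
  have he : epsH u = fun g : M2 => fderiv ℝ u g (g * Em) := funext fun g => epsH_eq u g
  rw [he]; exact h3


lemma fderiv_rmul {u : M2 → ℂ} {g : M2} (a : M2) (hu : DifferentiableAt ℝ u (g * a)) (v : M2) :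
    fderiv ℝ (fun x => u (x * a)) g v = fderiv ℝ u (g * a) (v * a) := by
  have h1 : HasFDerivAt (fun x : M2 => x * a) (mr a) g := (mr a).hasFDerivAt
  have h2 : HasFDerivAt (fun x : M2 => u (x * a)) ((fderiv ℝ u (g * a)).comp (mr a)) g :=
    HasFDerivAt.comp g (hu.hasFDerivAt) h1
  rw [h2.fderiv]; rfl

lemma fderiv_lmul {u : M2 → ℂ} {g : M2} (a : M2) (hu : DifferentiableAt ℝ u (a * g)) (v : M2) :
    fderiv ℝ (fun x => u (a * x)) g v = fderiv ℝ u (a * g) (a * v) := by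
  have h1 : HasFDerivAt (fun x : M2 => a * x) (ml a) g := (ml a).hasFDerivAt
  have h2 : HasFDerivAt (fun x : M2 => u (a * x)) ((fderiv ℝ u (a * g)).comp (ml a)) g :=
    HasFDerivAt.comp g (hu.hasFDerivAt) h1
  rw [h2.fderiv]; rfl

noncomputable def Dop (X : M2) (u : M2 → ℂ) (g : M2) : ℂ := fderiv ℝ u g (g * X)

lemma epsH_eq_Dop (u : M2 → ℂ) : epsH u = Dop Em u := funext fun g => epsH_eq u g

lemma Dop_smul {u : M2 → ℂ} (hu : DifferentiableAt ℝ u g) (c : ℂ) (X : M2) :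
    Dop X (fun x => c * u x) g = c * Dop X u g := by
  unfold Dop
  erw [fderiv_const_mul hu c]
  rfl

lemma Dop_comm {u : M2 → ℂ} (hu : ContDiff ℝ (⊤ : ℕ∞) u) (X Y : M2) (g : M2) :
    Dop X (Dop Y u) g = Dop Y (Dop X u) g + fderiv ℝ u g (g * (X * Y - Y * X)) := by
  have hdA : ContDiff ℝ (⊤ : ℕ∞) (fderiv ℝ u) := hu.fderiv_right (by simp)
  have key : ∀ Z W : M2, Dop Z (Dop W u) g
      = fderiv ℝ (fderiv ℝ u) g (g * Z) (g * W) + fderiv ℝ u g (g * Z * W) := by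
    intro Z W
    have hc : HasFDerivAt (fderiv ℝ u) (fderiv ℝ (fderiv ℝ u) g) g :=
      ((hdA.differentiable (by simp)) g).hasFDerivAt
    have hv : HasFDerivAt (fun h : M2 => h * W) (mr W) g := (mr W).hasFDerivAt
    have h := hc.clm_apply hv
    have he : Dop W u = fun h => fderiv ℝ u h (h * W) := rfl
    erw [show Dop Z (Dop W u) g = fderiv ℝ (fun h => fderiv ℝ u h (h * W)) g (g * Z) from rfl,
      h.fderiv]
    simp [mul_assoc]
    rw [add_comm, ← mul_assoc]; rfl
  have hsymm : fderiv ℝ (fderiv ℝ u) g (g * X) (g * Y)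
      = fderiv ℝ (fderiv ℝ u) g (g * Y) (g * X) :=
    second_derivative_symmetric (fun y => ((hu.differentiable (by simp)) y).hasFDerivAt)
      ((hdA.differentiable (by simp) g).hasFDerivAt) _ _
  rw [key X Y, key Y X, hsymm, mul_sub, map_sub]
  ring_nf
  rw [mul_assoc, mul_assoc]
  ring

def nmat (y : ℝ) : M2 := !![1, y; 0, 1]

lemma nmat_zero : nmat 0 = 1 := by
  ext i j; fin_cases i <;> fin_cases j <;> simp [nmat, Matrix.one_apply]

lemma nmat_eq (y : ℝ) : nmat y = 1 + y • Fm := by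
  ext i j; fin_cases i <;> fin_cases j <;>
    simp [nmat, Fm, Matrix.one_apply, Matrix.single]

lemma nmat_mul_F (y : ℝ) : nmat y * Fm = Fm := by
  ext i j; fin_cases i <;> fin_cases j <;>
    simp [nmat, Fm, Matrix.mul_apply, Fin.sum_univ_two, Matrix.single]

lemma gnmat (g : M2) (y : ℝ) : g * nmat y = g + y • (g * Fm) := by
  rw [nmat_eq, mul_add, mul_one, Matrix.mul_smul]

lemma bracket_HE : Hm * Em - Em * Hm = (-2 : ℝ) • Em := by
  ext i j; fin_cases i <;> fin_cases j <;>
    simp [Hm, Em, Matrix.mul_apply, Fin.sum_univ_two, Matrix.single,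
      Matrix.diagonal]
  norm_num

lemma bracket_FE : Fm * Em - Em * Fm = Hm := by
  ext i j; fin_cases i <;> fin_cases j <;>
    simp [Hm, Em, Fm, Matrix.mul_apply, Fin.sum_univ_two, Matrix.single,
      Matrix.diagonal]

lemma hasDerivAt_right_nmat {u : M2 → ℂ} (hu : Differentiable ℝ u) (g : M2) (y : ℝ) :
    HasDerivAt (fun y => u (g * nmat y)) (fderiv ℝ u (g * nmat y) ((g * nmat y) * Fm)) y := by
  have hc : HasDerivAt (fun y : ℝ => g + y • (g * Fm)) (g * Fm) y := by
    exact (((hasDerivAt_id y).smul_const (g * Fm)).const_add g).congr_deriv (one_smul _ _)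
  have h := (hu (g + y • (g * Fm))).hasFDerivAt.comp_hasDerivAt y hc
  simp only [Function.comp_def] at h
  have heq : (fun y : ℝ => u (g + y • (g * Fm))) = fun y => u (g * nmat y) := by
    funext z; rw [gnmat]
  rw [heq] at h
  have h2 : (g * nmat y) * Fm = g * Fm := by rw [mul_assoc, nmat_mul_F]
  rw [← gnmat, ← h2] at h
  exact h


lemma nmat_tri (y : ℝ) : (nmat y).BlockTriangular id := by
  intro i j hij
  fin_cases i <;> fin_cases j <;> simp_all [nmat]

lemma nmat_diag (y : ℝ) : ∀ i, nmat y i i = 1 := by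
  intro i; fin_cases i <;> simp [nmat]

lemma cpow_exp (t : ℝ) (s : ℂ) : ((|Real.exp t| : ℝ) : ℂ) ^ s = Complex.exp (s * t) := by
  rw [abs_of_pos (Real.exp_pos t), Complex.ofReal_exp,
    Complex.cpow_def_of_ne_zero (Complex.exp_ne_zero _), Complex.log_exp]
  · rw [mul_comm]
  · simp [Real.pi_pos]
  · simp [Real.pi_pos.le]

section Main

variable {η : Fin 2 → ℕ} {ν : Fin 2 → ℂ} {f : M2 → ℂ}

lemma DF_base (hf : ContDiff ℝ (⊤ : ℕ∞) f) (hfP : PS 2 η ν f) (g : M2) :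
    fderiv ℝ f g (g * Fm) = 0 := by
  have hone : ∀ y : ℝ, f (g * nmat y) = f g := by
    intro y
    have h := hfP g (nmat y) (fun _ => 1) (fun _ => one_ne_zero) (nmat_tri y) (nmat_diag y)
    simpa [Real.sign_one, Complex.one_cpow] using h
  have h0 := hasDerivAt_right_nmat (hf.differentiable (by simp)) g 0
  have hcst : HasDerivAt (fun y : ℝ => f (g * nmat y)) 0 0 := by
    rw [show (fun y : ℝ => f (g * nmat y)) = fun _ => f g from funext hone]
    exact hasDerivAt_const 0 (f g)
  have huni := hcst.unique h0
  rw [nmat_zero, mul_one] at huni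
  exact huni.symm

lemma DH_base (hf : ContDiff ℝ (⊤ : ℕ∞) f) (hfP : PS 2 η ν f) (g : M2) :
    fderiv ℝ f g (g * Hm) = (ν 1 - ν 0 - 1) * f g := by
  set A := g * Matrix.diagonal ![(1:ℝ), 0] with hA
  set B := g * Matrix.diagonal ![(0:ℝ), 1] with hB
  have hc : ∀ t : ℝ, g * Matrix.diagonal ![Real.exp t, Real.exp (-t)]
      = Real.exp t • A + Real.exp (-t) • B := by
    intro t
    rw [hA, hB, ← Matrix.mul_smul, ← Matrix.mul_smul, ← mul_add]
    congr 1
    ext i j; fin_cases i <;> fin_cases j <;> simp [Matrix.diagonal]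
  have hAB : A - B = g * Hm := by
    rw [hA, hB, ← mul_sub]
    congr 1
    ext i j; fin_cases i <;> fin_cases j <;> simp [Hm, Matrix.diagonal]
  have hc0 : Real.exp 0 • A + Real.exp (-0) • B = g := by
    rw [← hc 0]
    have : Matrix.diagonal ![Real.exp 0, Real.exp (-0)] = (1 : M2) := by
      ext i j; fin_cases i <;> fin_cases j <;>
        simp [Matrix.diagonal, Matrix.one_apply, Real.exp_zero]
    rw [this, mul_one]
  have hcder : HasDerivAt (fun t : ℝ => Real.exp t • A + Real.exp (-t) • B) (g * Hm) 0 := by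
    have h1 : HasDerivAt (fun t : ℝ => Real.exp t) 1 0 := by
      simpa using Real.hasDerivAt_exp 0
    have h2 : HasDerivAt (fun t : ℝ => Real.exp (-t)) (-1) 0 := by
      have := (Real.hasDerivAt_exp (-(0:ℝ))).comp 0 (hasDerivAt_neg 0)
      simpa [Function.comp_def] using this
    have h3 := (h1.smul_const A).add (h2.smul_const B)
    have h4 : (1:ℝ) • A + (-1:ℝ) • B = g * Hm := by
      rw [one_smul, neg_one_smul, ← sub_eq_add_neg, hAB]
    rwa [h4] at h3
  have hval : ∀ t : ℝ, f (Real.exp t • A + Real.exp (-t) • B)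
      = Complex.exp ((ν 1 - ν 0 - 1) * t) * f g := by
    intro t
    rw [← hc t]
    have hne : ∀ i, ![Real.exp t, Real.exp (-t)] i ≠ 0 := by
      intro i; fin_cases i <;> simp [Real.exp_ne_zero]
    have h := hfP g 1 ![Real.exp t, Real.exp (-t)] hne Matrix.blockTriangular_one
      (fun i => Matrix.one_apply_eq i)
    rw [mul_one] at h
    rw [h]
    congr 1
    rw [Fin.prod_univ_two]
    simp only [Matrix.cons_val_zero, Matrix.cons_val_one, Matrix.head_cons]
    rw [Real.sign_of_pos (Real.exp_pos t), Real.sign_of_pos (Real.exp_pos (-t))]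
    rw [cpow_exp, cpow_exp]
    simp only [Complex.ofReal_one, one_pow, one_mul]
    rw [← Complex.exp_add]
    congr 1
    push_cast [Fin.val_zero, Fin.val_one]
    ring
  have h1 : HasDerivAt (fun t : ℝ => f (Real.exp t • A + Real.exp (-t) • B))
      (fderiv ℝ f g (g * Hm)) 0 := by
    have hcomp := ((hf.differentiable (by simp)) _).hasFDerivAt.comp_hasDerivAt 0 hcder
    simp only [Function.comp_def] at hcomp
    rwa [hc0] at hcomp
  have h2 : HasDerivAt (fun t : ℝ => Complex.exp ((ν 1 - ν 0 - 1) * t) * f g)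
      ((ν 1 - ν 0 - 1) * f g) 0 := by
    have hco : HasDerivAt (fun t : ℝ => ((t:ℝ):ℂ)) 1 0 := by
      simpa using (hasDerivAt_id (0:ℝ)).ofReal_comp
    have h3 := ((hco.const_mul (ν 1 - ν 0 - 1)).cexp).mul_const (f g)
    have h4 : Complex.exp ((ν 1 - ν 0 - 1) * ((0:ℝ):ℂ)) * ((ν 1 - ν 0 - 1) * 1) * f g
        = (ν 1 - ν 0 - 1) * f g := by simp
    rwa [h4] at h3
  rw [show (fun t : ℝ => f (Real.exp t • A + Real.exp (-t) • B))
    = fun t : ℝ => Complex.exp ((ν 1 - ν 0 - 1) * t) * f g from funext hval] at h1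
  exact h1.unique h2


lemma contDiff_iter (hf : ContDiff ℝ (⊤ : ℕ∞) f) (m : ℕ) : ContDiff ℝ (⊤ : ℕ∞) (epsH^[m] f) := by
  induction m with
  | zero => exact hf
  | succ m ih =>
    rw [Function.iterate_succ_apply']
    exact contDiff_epsH ih

lemma iter_succ (f : M2 → ℂ) (m : ℕ) : epsH^[m+1] f = Dop Em (epsH^[m] f) := by
  rw [Function.iterate_succ_apply']
  exact epsH_eq_Dop _

lemma HLem (hf : ContDiff ℝ (⊤ : ℕ∞) f) (hfP : PS 2 η ν f) :
    ∀ m g, Dop Hm (epsH^[m] f) g = (ν 1 - ν 0 - 1 - 2 * m) * epsH^[m] f g := by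
  intro m
  induction m with
  | zero =>
    intro g
    simpa [Dop] using DH_base hf hfP g
  | succ m ih =>
    intro g
    have hsm := contDiff_iter hf m
    rw [iter_succ f m, Dop_comm hsm Hm Em g, bracket_HE, Matrix.mul_smul,
      (fderiv ℝ (epsH^[m] f) g).map_smul,
      show Dop Hm (epsH^[m] f) = fun x => (ν 1 - ν 0 - 1 - 2 * m) * epsH^[m] f x
        from funext ih,
      Dop_smul (hsm.differentiable (by simp) g)]
    have h2 : Dop Em (epsH^[m] f) g = epsH^[m+1] f g := by rw [iter_succ f m]
    have h3 : fderiv ℝ (epsH^[m] f) g (g * Em) = epsH^[m+1] f g := by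
      rw [← epsH_eq, Function.iterate_succ_apply']
    rw [h2, h3, Complex.real_smul]
    push_cast
    ring

lemma FLem (hf : ContDiff ℝ (⊤ : ℕ∞) f) (hfP : PS 2 η ν f) :
    ∀ m g, Dop Fm (epsH^[m] f) g = (m : ℂ) * (ν 1 - ν 0 - m) * epsH^[m-1] f g := by
  intro m
  induction m with
  | zero =>
    intro g
    simp [Dop, DF_base hf hfP g]
  | succ m ih =>
    intro g
    have hsm := contDiff_iter hf m
    rw [iter_succ f m, Dop_comm hsm Fm Em g, bracket_FE,
      show Dop Fm (epsH^[m] f) = fun x => (m : ℂ) * (ν 1 - ν 0 - m) * epsH^[m-1] f x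
        from funext ih,
      Dop_smul ((contDiff_iter hf (m-1)).differentiable (by simp) g)]
    have hH : fderiv ℝ (epsH^[m] f) g (g * Hm) = (ν 1 - ν 0 - 1 - 2 * m) * epsH^[m] f g :=
      HLem hf hfP m g
    have hD : (m : ℂ) * (ν 1 - ν 0 - m) * Dop Em (epsH^[m-1] f) g
        = (m : ℂ) * (ν 1 - ν 0 - m) * epsH^[m] f g := by
      cases m with
      | zero => simp
      | succ j =>
        congr 1
        rw [show (j + 1 - 1 : ℕ) = j from rfl, ← iter_succ f j]
    rw [hD, hH, show (m + 1 - 1 : ℕ) = m from rfl]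
    push_cast
    ring


lemma inv_lemma (hf : ContDiff ℝ (⊤ : ℕ∞) f) (hfP : PS 2 η ν f) (k0 : ℕ)
    (hν : ν 1 - ν 0 = (k0 : ℂ)) :
    ∀ (g : M2) (y : ℝ), epsH^[k0] f (g * nmat y) = epsH^[k0] f g := by
  have hnull : ∀ h : M2, fderiv ℝ (epsH^[k0] f) h (h * Fm) = 0 := by
    intro h
    have h1 : Dop Fm (epsH^[k0] f) h = (k0 : ℂ) * (ν 1 - ν 0 - k0) * epsH^[k0-1] f h :=
      FLem hf hfP k0 h
    rw [hν, sub_self, mul_zero, zero_mul] at h1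
    exact h1
  intro g y
  have hdu : Differentiable ℝ (epsH^[k0] f) := (contDiff_iter hf k0).differentiable (by simp)
  have hder : ∀ z : ℝ, HasDerivAt (fun y : ℝ => epsH^[k0] f (g * nmat y)) 0 z := by
    intro z
    have h := hasDerivAt_right_nmat hdu g z
    rwa [hnull] at h
  have hc := is_const_of_deriv_eq_zero (fun z => (hder z).differentiableAt)
      (fun z => (hder z).deriv) y 0
  simpa [nmat_zero] using hc

noncomputable def chi (ν : Fin 2 → ℂ) (η : Fin 2 → ℕ) (d : Fin 2 → ℝ) : ℂ :=
  ∏ i, (Real.sign (d i) : ℂ) ^ (η i)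
    * ((|d i| : ℝ) : ℂ) ^ (-(ν i) - (((2:ℕ) : ℂ) - 1 - 2 * (i : ℕ)) / 2)

lemma diag_lemma (hf : ContDiff ℝ (⊤ : ℕ∞) f) (hfP : PS 2 η ν f) (d : Fin 2 → ℝ)
    (hd : ∀ i, d i ≠ 0) : ∀ (m : ℕ) (g : M2),
    epsH^[m] f (g * Matrix.diagonal d)
      = ((d 1 / d 0 : ℝ) : ℂ) ^ m * chi ν η d * epsH^[m] f g := by
  intro m
  induction m with
  | zero =>
    intro g
    have h := hfP g 1 d hd Matrix.blockTriangular_one (fun i => Matrix.one_apply_eq i)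
    rw [mul_one] at h
    simpa [chi] using h
  | succ m ih =>
    intro g
    have hsm := contDiff_iter hf m
    have hdE : Matrix.diagonal d * Em = d 1 • Em := by
      ext i j
      fin_cases i <;> fin_cases j <;>
        simp [Em, Matrix.mul_apply, Fin.sum_univ_two, Matrix.single, Matrix.diagonal]
    have hEd : Em * Matrix.diagonal d = d 0 • Em := by
      ext i j
      fin_cases i <;> fin_cases j <;>
        simp [Em, Matrix.mul_apply, Fin.sum_univ_two, Matrix.single, Matrix.diagonal]
    have key : (g * Matrix.diagonal d) * Em
        = (d 1 / d 0) • ((g * Em) * Matrix.diagonal d) := by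
      rw [mul_assoc, hdE, mul_assoc, hEd, Matrix.mul_smul, Matrix.mul_smul, smul_smul,
        div_mul_cancel₀ _ (hd 0)]
    rw [iter_succ f m]
    calc Dop Em (epsH^[m] f) (g * Matrix.diagonal d)
        = fderiv ℝ (epsH^[m] f) (g * Matrix.diagonal d)
            ((g * Matrix.diagonal d) * Em) := rfl
      _ = (d 1 / d 0) • fderiv ℝ (epsH^[m] f) (g * Matrix.diagonal d)
            ((g * Em) * Matrix.diagonal d) := by
          rw [key, _root_.map_smul]
      _ = (d 1 / d 0) • fderiv ℝ (fun x => epsH^[m] f (x * Matrix.diagonal d)) g (g * Em) := by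
          rw [fderiv_rmul _ (hsm.differentiable (by simp) _) _]
      _ = (d 1 / d 0) • (((d 1 / d 0 : ℝ) : ℂ) ^ m * chi ν η d
            * fderiv ℝ (epsH^[m] f) g (g * Em)) := by
          rw [show (fun x : M2 => epsH^[m] f (x * Matrix.diagonal d))
              = fun x => ((d 1 / d 0 : ℝ) : ℂ) ^ m * chi ν η d * epsH^[m] f x
              from funext ih]
          erw [fderiv_const_mul (hsm.differentiable (by simp) g)]
          rfl
      _ = ((d 1 / d 0 : ℝ) : ℂ) ^ (m+1) * chi ν η d * Dop Em (epsH^[m] f) g := by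
          rw [show Dop Em (epsH^[m] f) g = fderiv ℝ (epsH^[m] f) g (g * Em) from rfl,
            Complex.real_smul]
          push_cast
          ring

lemma left_lemma (hf : ContDiff ℝ (⊤ : ℕ∞) f) : ∀ (m : ℕ) (h0 g : M2),
    epsH^[m] f (h0 * g) = epsH^[m] (fun x => f (h0 * x)) g := by
  intro m h0
  induction m with
  | zero => intro g; rfl
  | succ m ih =>
    intro g
    rw [Function.iterate_succ_apply' epsH m (fun x => f (h0 * x)),
      show epsH^[m] (fun x => f (h0 * x)) = fun x => epsH^[m] f (h0 * x)
        from funext fun x => (ih x).symm,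
      Function.iterate_succ_apply' epsH m f, epsH_eq, epsH_eq,
      fderiv_lmul h0 ((contDiff_iter hf m).differentiable (by simp) _) _, mul_assoc]

end Main

lemma real_sign_mul_abs {r : ℝ} (h : r ≠ 0) : Real.sign r * |r| = r := by
  rcases h.lt_or_gt with h1 | h1
  · rw [Real.sign_of_neg h1, abs_of_neg h1]; ring
  · rw [Real.sign_of_pos h1, abs_of_pos h1]; ring

lemma scalar_lemma (ν : Fin 2 → ℂ) (η : Fin 2 → ℕ) (k0 : ℕ) (d : Fin 2 → ℝ)
    (hd : ∀ i, d i ≠ 0) :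
    (∏ i, (Real.sign (d i) : ℂ) ^ (η i + k0 % 2)
      * ((|d i| : ℝ) : ℂ) ^ (-(if i = 0 then ν 0 + (k0:ℂ) else ν 1 - (k0:ℂ))
          - (((2:ℕ) : ℂ) - 1 - 2 * (i : ℕ)) / 2))
    = ((d 1 / d 0 : ℝ) : ℂ) ^ k0 * chi ν η d := by
  have habs0 : ((|d 0| : ℝ) : ℂ) ≠ 0 := by
    simp [Complex.ofReal_ne_zero, abs_ne_zero, hd 0]
  have habs1 : ((|d 1| : ℝ) : ℂ) ≠ 0 := by
    simp [Complex.ofReal_ne_zero, abs_ne_zero, hd 1]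
  have hsq : ∀ i, (Real.sign (d i) : ℂ) ^ 2 = 1 := by
    intro i
    rcases Real.sign_apply_eq_of_ne_zero (d i) (hd i) with h | h <;> rw [h] <;> norm_num
  have hper : ∀ i, (Real.sign (d i) : ℂ) ^ k0 = (Real.sign (d i) : ℂ) ^ (k0 % 2) := by
    intro i
    conv_lhs => rw [← Nat.div_add_mod k0 2]
    rw [pow_add, pow_mul, hsq i, one_pow, one_mul]
  have hqq : (Real.sign (d 0) : ℂ) ^ (k0 % 2) * (Real.sign (d 0) : ℂ) ^ (k0 % 2) = 1 := by
    rw [← pow_add, ← two_mul, pow_mul, hsq 0, one_pow]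
  have hs0 : (Real.sign (d 0) : ℂ) ^ (k0 % 2) ≠ 0 := by
    intro h0
    rw [h0, mul_zero] at hqq
    exact zero_ne_one hqq
  have hR : ((d 1 / d 0 : ℝ) : ℂ) ^ k0
      = (Real.sign (d 0) : ℂ) ^ (k0 % 2) * (Real.sign (d 1) : ℂ) ^ (k0 % 2)
        * ((|d 1| : ℝ) : ℂ) ^ k0 / ((|d 0| : ℝ) : ℂ) ^ k0 := by
    have h0 : ((d 0 : ℝ) : ℂ) = (Real.sign (d 0) : ℂ) * ((|d 0| : ℝ) : ℂ) := by
      rw [← Complex.ofReal_mul, real_sign_mul_abs (hd 0)]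
    have h1 : ((d 1 : ℝ) : ℂ) = (Real.sign (d 1) : ℂ) * ((|d 1| : ℝ) : ℂ) := by
      rw [← Complex.ofReal_mul, real_sign_mul_abs (hd 1)]
    rw [Complex.ofReal_div, h0, h1, div_pow, mul_pow, mul_pow, hper 0, hper 1]
    rw [div_eq_div_iff (mul_ne_zero hs0 (pow_ne_zero k0 habs0)) (pow_ne_zero k0 habs0)]
    linear_combination (-((Real.sign (d 1) : ℂ) ^ (k0 % 2) * ((|d 1| : ℝ) : ℂ) ^ k0
      * ((|d 0| : ℝ) : ℂ) ^ k0)) * hqq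
  rw [chi, Fin.prod_univ_two, Fin.prod_univ_two]
  have hif0 : (if (0 : Fin 2) = 0 then ν 0 + (k0:ℂ) else ν 1 - (k0:ℂ)) = ν 0 + (k0:ℂ) :=
    if_pos rfl
  have hif1 : (if (1 : Fin 2) = 0 then ν 0 + (k0:ℂ) else ν 1 - (k0:ℂ)) = ν 1 - (k0:ℂ) := by
    rw [if_neg]
    intro h
    exact absurd (congrArg Fin.val h) (by norm_num)
  rw [hif0, hif1]
  rw [show -(ν 0 + (k0:ℂ)) - (((2:ℕ) : ℂ) - 1 - 2 * ((0 : Fin 2) : ℕ)) / 2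
      = (-(ν 0) - (((2:ℕ) : ℂ) - 1 - 2 * ((0 : Fin 2) : ℕ)) / 2) - (k0:ℕ) from by
        push_cast; ring,
    show -(ν 1 - (k0:ℂ)) - (((2:ℕ) : ℂ) - 1 - 2 * ((1 : Fin 2) : ℕ)) / 2
      = (-(ν 1) - (((2:ℕ) : ℂ) - 1 - 2 * ((1 : Fin 2) : ℕ)) / 2) + (k0:ℕ) from by
        push_cast; ring,
    Complex.cpow_sub _ _ habs0, Complex.cpow_add _ _ habs1,
    Complex.cpow_natCast, Complex.cpow_natCast, pow_add, pow_add, hR]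
  ring

end Stmt14Aux

/-- If `ν₂ − ν₁ = k₀ ∈ ℕ` then `(ε_H^{2,1})^{k₀} : τ_{η,ν} → τ_{η',ν'}` with
`η' = (η₁+[k₀], η₂+[k₀])`, `ν' = (ν₁+k₀, ν₂−k₀)`, intertwining the left regular action; in
particular `(ε_H^{2,1})^{k₀} f` is right-invariant under the unipotent upper triangular
subgroup. -/


theorem stmt14 (η : Fin 2 → ℕ) (ν : Fin 2 → ℂ) (k0 : ℕ) (hν : ν 1 - ν 0 = (k0 : ℂ))
    (f : Matrix (Fin 2) (Fin 2) ℝ → ℂ) (hf : ContDiff ℝ (⊤ : ℕ∞) f) (hfP : PS 2 η ν f) :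
    PS 2 (fun i => η i + k0 % 2)
      (fun i => if i = 0 then ν 0 + (k0 : ℂ) else ν 1 - (k0 : ℂ)) (epsH^[k0] f)
    ∧ (∀ (g : Matrix (Fin 2) (Fin 2) ℝ) (y : ℝ),
        (epsH^[k0] f) (g * !![1, y; 0, 1]) = (epsH^[k0] f) g)
    ∧ (∀ h0 g : Matrix (Fin 2) (Fin 2) ℝ,
        (epsH^[k0] f) (h0 * g) = (epsH^[k0] (fun x => f (h0 * x))) g) := by
  refine ⟨?_, ?_, ?_⟩
  · intro g u d hd htri hdiag
    have hu : u = Stmt14Aux.nmat (u 0 1) := by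
      ext i j
      fin_cases i <;> fin_cases j
      · simpa [Stmt14Aux.nmat] using hdiag 0
      · simp [Stmt14Aux.nmat]
      · simpa [Stmt14Aux.nmat] using htri (show id (0 : Fin 2) < id 1 by decide)
      · simpa [Stmt14Aux.nmat] using hdiag 1
    rw [hu, show g * (Matrix.diagonal d * Stmt14Aux.nmat (u 0 1))
        = (g * Matrix.diagonal d) * Stmt14Aux.nmat (u 0 1) from by rw [mul_assoc],
      Stmt14Aux.inv_lemma hf hfP k0 hν (g * Matrix.diagonal d) (u 0 1),
      Stmt14Aux.diag_lemma hf hfP d hd k0 g]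
    congr 1
    exact (Stmt14Aux.scalar_lemma ν η k0 d hd).symm
  · intro g y
    exact Stmt14Aux.inv_lemma hf hfP k0 hν g y
  · intro h0 g
    exact Stmt14Aux.left_lemma hf k0 h0 g
end

section
/- With notation as in the previous statement (H = GL_2(ℝ), f ∈ τ_{η,ν}, ε = ε_H^{2,1} the right derivative by E_{2,1}, n(y) = [[1,y],[0,1]]), the identity ε^ℓ f(g·n(y)) = Σ_{j=0}^ℓ binom(ℓ,j) (ν_2 − ν_1 − ℓ)_j y^j ε^{ℓ−j} f(g) holds for all ℓ ∈ ℕ, g ∈ GL_2(ℝ), y ∈ ℝ. -/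
open Matrix

attribute [local instance] Matrix.normedAddCommGroup Matrix.normedSpace

/-- Rising Pochhammer symbol `(a)_j = a(a+1)⋯(a+j−1)`. -/
def poch (a : ℂ) (j : ℕ) : ℂ := ∏ i ∈ Finset.range j, (a + i)


abbrev M2 := Matrix (Fin 2) (Fin 2) ℝ
def Nn (y : ℝ) : M2 := !![1, y; 0, 1]
def Lo (t : ℝ) : M2 := !![1, 0; t, 1]
noncomputable def Dm (w : ℝ) : M2 := Matrix.diagonal ![w, w⁻¹]

lemma Lo_zero : Lo 0 = 1 := by
  simp [Lo]; ext i j; fin_cases i <;> fin_cases j <;> simp [Matrix.one_apply]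

lemma Nn_zero : Nn 0 = 1 := by
  ext i j; fin_cases i <;> fin_cases j <;> simp [Nn, Matrix.one_apply]

lemma decomp (y t : ℝ) (h : 1 + t * y ≠ 0) :
    Nn y * Lo t = Lo (t / (1 + t * y)) * (Dm (1 + t * y) * Nn (y / (1 + t * y))) := by
  have h' : 1 + y * t ≠ 0 := by rwa [mul_comm y t]
  ext i j
  fin_cases i <;> fin_cases j <;>
    simp [Nn, Lo, Dm, Matrix.mul_apply, Fin.sum_univ_two, Matrix.diagonal] <;>
    (try field_simp) <;> ring

lemma decompD (w t : ℝ) (h : w ≠ 0) :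
    Dm w * Lo t = Lo (t / (w * w)) * Dm w := by
  ext i j
  fin_cases i <;> fin_cases j <;>
    simp [Lo, Dm, Matrix.mul_apply, Fin.sum_univ_two, Matrix.diagonal] <;>
    field_simp <;> ring


noncomputable def E21 : M2 := Matrix.single 1 0 (1:ℝ)

lemma sum_smul_std (m : M2) : ∑ k, (m k 1) • Matrix.single k 0 (1:ℝ) = m * E21 := by
  ext i j
  rw [Matrix.sum_apply]
  fin_cases i <;> fin_cases j <;>
    simp [Matrix.mul_apply, Fin.sum_univ_two, E21, Matrix.single]

lemma epsH_eq (F : Matrix (Fin 2) (Fin 2) ℝ → ℂ) (m : M2) :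
    epsH F m = fderiv ℝ F m (m * E21) := by
  rw [← sum_smul_std, map_sum]
  refine Finset.sum_congr rfl fun k _ => ?_
  rw [_root_.map_smul, Complex.real_smul]

lemma mul_E21 (h : M2) (t : ℝ) : (h * Lo t) * E21 = h * E21 := by
  rw [Matrix.mul_assoc]
  congr 1
  ext i j; fin_cases i <;> fin_cases j <;>
    simp [Lo, E21, Matrix.mul_apply, Fin.sum_univ_two, Matrix.single]

lemma Lo_eq (h : M2) : (fun s : ℝ => h * Lo s) = fun s => h + s • (h * E21) := by
  funext s
  ext i j; fin_cases i <;> fin_cases j <;>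
    simp [Lo, E21, Matrix.mul_apply, Fin.sum_univ_two, Matrix.single, mul_comm]

lemma hasDerivAt_epsH {F : Matrix (Fin 2) (Fin 2) ℝ → ℂ} (hF : ContDiff ℝ (⊤ : ℕ∞) F)
    (h : M2) (t : ℝ) :
    HasDerivAt (fun s => F (h * Lo s)) (epsH F (h * Lo t)) t := by
  have hc : HasDerivAt (fun s : ℝ => h * Lo s) (h * E21) t := by
    rw [Lo_eq]
    exact (((hasDerivAt_id t).smul_const (h * E21)).const_add h).congr_deriv (by simp)
  have := (hF.differentiable (by simp) (h * Lo t)).hasFDerivAt.comp_hasDerivAt t hc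
  rw [epsH_eq, mul_E21 h t]
  exact this

lemma contDiff_epsH {F : Matrix (Fin 2) (Fin 2) ℝ → ℂ} (hF : ContDiff ℝ (⊤ : ℕ∞) F) :
    ContDiff ℝ (⊤ : ℕ∞) (epsH F) := by
  have : epsH F = fun m => fderiv ℝ F m (m * E21) := funext fun m => epsH_eq F m
  rw [this]
  exact (hF.fderiv_right (by simp)).clm_apply
    ((LinearMap.mulRight ℝ E21).toContinuousLinearMap.contDiff)

lemma contDiff_iter {f : Matrix (Fin 2) (Fin 2) ℝ → ℂ} (hf : ContDiff ℝ (⊤ : ℕ∞) f) (k : ℕ) :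
    ContDiff ℝ (⊤ : ℕ∞) (epsH^[k] f) := by
  induction k with
  | zero => exact hf
  | succ k ih => rw [Function.iterate_succ_apply']; exact contDiff_epsH ih

lemma psDN {η : Fin 2 → ℕ} {ν : Fin 2 → ℂ} {f : Matrix (Fin 2) (Fin 2) ℝ → ℂ}
    (hfP : PS 2 η ν f) {w : ℝ} (hw : 0 < w) (v : ℝ) (h : M2) :
    f (h * (Dm w * Nn v)) = (w : ℂ) ^ (ν 1 - ν 0 - 1) * f h := by
  have hBT : (Nn v).BlockTriangular id := by
    intro i j hij
    fin_cases i <;> fin_cases j <;> simp_all [Nn] <;> omega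
  have hd : ∀ i : Fin 2, (![w, w⁻¹] : Fin 2 → ℝ) i ≠ 0 := by
    intro i; fin_cases i <;> simp [hw.ne', inv_ne_zero hw.ne']
  have hdiag : ∀ i : Fin 2, Nn v i i = 1 := by
    intro i; fin_cases i <;> simp [Nn]
  have := hfP h (Nn v) ![w, w⁻¹] hd hBT hdiag
  rw [show Matrix.diagonal ![w, w⁻¹] = Dm w from rfl] at this
  rw [this, Fin.prod_univ_two]
  congr 1
  have h1 : Real.sign w = 1 := Real.sign_of_pos hw
  have h2 : Real.sign w⁻¹ = 1 := Real.sign_of_pos (inv_pos.mpr hw)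
  have h3 : |w| = w := abs_of_pos hw
  have h4 : |w⁻¹| = w⁻¹ := abs_of_pos (inv_pos.mpr hw)
  simp only [Matrix.cons_val_zero, Matrix.cons_val_one, Matrix.head_cons, h1, h2, h3, h4]
  push_cast
  rw [Complex.inv_cpow _ _ (by
    rw [Complex.arg_ofReal_of_nonneg hw.le]; exact Real.pi_pos.ne)]
  rw [one_pow, one_pow, one_mul, one_mul, ← div_eq_mul_inv, ← Complex.cpow_sub _ _
    (Complex.ofReal_ne_zero.mpr hw.ne')]
  congr 1
  push_cast [Fin.val_zero, Fin.val_one]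
  ring

lemma scaleD {η : Fin 2 → ℕ} {ν : Fin 2 → ℂ} {f : Matrix (Fin 2) (Fin 2) ℝ → ℂ}
    (hf : ContDiff ℝ (⊤ : ℕ∞) f) (hfP : PS 2 η ν f) (k : ℕ) (h : M2) {w : ℝ} (hw : 0 < w) :
    (epsH^[k] f) (h * Dm w) = (w : ℂ) ^ (ν 1 - ν 0 - 1 - 2 * (k:ℂ)) * (epsH^[k] f) h := by
  induction k generalizing h with
  | zero =>
    have := psDN hfP hw 0 h
    rw [Nn_zero, mul_one] at this
    simpa using this
  | succ k ih =>
    have hwC : (w : ℂ) ≠ 0 := Complex.ofReal_ne_zero.mpr hw.ne'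
    set G := epsH^[k] f with hG
    have hGs : ContDiff ℝ (⊤ : ℕ∞) G := contDiff_iter hf k
    have h1 : HasDerivAt (fun t => G ((h * Dm w) * Lo t)) (epsH G ((h * Dm w) * Lo 0)) 0 :=
      hasDerivAt_epsH hGs (h * Dm w) 0
    have heq : (fun t => G ((h * Dm w) * Lo t))
        = fun t => (w : ℂ) ^ (ν 1 - ν 0 - 1 - 2 * (k:ℂ)) * G (h * Lo (t / (w * w))) := by
      funext t
      rw [Matrix.mul_assoc, decompD w t hw.ne', ← Matrix.mul_assoc, ih]
    have inner : HasDerivAt (fun t : ℝ => t / (w * w)) ((w*w)⁻¹) 0 := by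
      simpa [one_div] using (hasDerivAt_id (0:ℝ)).div_const (w*w)
    have comp := (hasDerivAt_epsH hGs h 0).scomp_of_eq (x := (0:ℝ)) inner (by simp)
    have h2 : HasDerivAt (fun t => (w : ℂ) ^ (ν 1 - ν 0 - 1 - 2 * (k:ℂ)) * G (h * Lo (t / (w * w))))
        ((w : ℂ) ^ (ν 1 - ν 0 - 1 - 2 * (k:ℂ)) * ((w*w)⁻¹ • epsH G (h * Lo 0))) 0 :=
      comp.const_mul _
    have key := h1.unique (heq ▸ h2)
    rw [Lo_zero, mul_one, mul_one] at key
    rw [Function.iterate_succ_apply', ← hG, key]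
    have e1 : ((w:ℂ) * w)⁻¹ = (w:ℂ) ^ (-2 : ℂ) := by
      rw [show ((-2:ℂ)) = -((2:ℕ):ℂ) by norm_num, Complex.cpow_neg, Complex.cpow_natCast]
      ring_nf
    rw [Complex.real_smul]
    push_cast
    rw [e1, ← mul_assoc, ← Complex.cpow_add _ _ hwC]
    congr 1
    push_cast
    ring

lemma poch_zero (a : ℂ) : poch a 0 = 1 := by simp [poch]

lemma poch_succ (a : ℂ) (j : ℕ) : poch a (j+1) = poch a j * (a + j) :=
  Finset.prod_range_succ _ _

lemma poch_succ' (a : ℂ) (j : ℕ) : poch a (j+1) = a * poch (a+1) j := by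
  simp only [poch, Finset.prod_range_succ']
  push_cast
  simp only [add_zero]
  rw [mul_comm]
  congr 1
  exact Finset.prod_congr rfl fun i _ => by ring

lemma keyC (l j : ℕ) : ((j:ℂ) + 1) * (l.choose (j+1)) = ((l:ℂ) - j) * (l.choose j) := by
  rcases le_or_gt j l with h | h
  · have h1 := Nat.choose_succ_right_eq l j
    have h2 := congrArg (Nat.cast : ℕ → ℂ) h1
    push_cast [Nat.cast_sub h] at h2
    linear_combination h2
  · rw [Nat.choose_eq_zero_of_lt h, Nat.choose_eq_zero_of_lt (h.trans (Nat.lt_succ_self _))]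
    simp

lemma pascalPoch (z : ℂ) (l j : ℕ) :
    (l.choose j : ℂ) * poch (z - l) j * (z - 1 - 2*l + j)
      + (l.choose (j+1) : ℂ) * poch (z - l) (j+1)
      = ((l+1).choose (j+1) : ℂ) * poch (z - l - 1) (j+1) := by
  rw [poch_succ, poch_succ' (z - l - 1) j, show z - l - 1 + 1 = z - l by ring,
    Nat.choose_succ_succ, Nat.cast_add]
  linear_combination poch (z - l) j * keyC l j

/-- For `f ∈ τ_{η,ν}`:
`ε^ℓ f(g·n(y)) = Σ_{j=0}^ℓ binom(ℓ,j)(ν₂−ν₁−ℓ)_j y^j ε^{ℓ−j} f(g)`. -/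
theorem stmt15 (η : Fin 2 → ℕ) (ν : Fin 2 → ℂ)
    (f : Matrix (Fin 2) (Fin 2) ℝ → ℂ) (hf : ContDiff ℝ (⊤ : ℕ∞) f) (hfP : PS 2 η ν f)
    (l : ℕ) (g : Matrix (Fin 2) (Fin 2) ℝ) (y : ℝ) :
    (epsH^[l] f) (g * !![1, y; 0, 1])
      = ∑ j ∈ Finset.range (l+1),
          (l.choose j : ℂ) * poch (ν 1 - ν 0 - (l : ℂ)) j * (y : ℂ)^j * (epsH^[l-j] f) g := by
  induction l generalizing g y with
  | zero =>
    have hD1 : Dm 1 = 1 := by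
      ext i j; fin_cases i <;> fin_cases j <;> simp [Dm, Matrix.diagonal, Matrix.one_apply]
    have := psDN hfP one_pos y g
    rw [hD1, one_mul] at this
    simpa [Nn, poch_zero] using this
  | succ l ih =>
    have hfl : ∀ k, ContDiff ℝ (⊤ : ℕ∞) (epsH^[k] f) := contDiff_iter hf
    set b : ℂ := ν 1 - ν 0 with hb
    set S : ℝ → ℂ := fun t => ∑ j ∈ Finset.range (l+1),
        (l.choose j : ℂ) * poch (b - l) j * (y:ℂ)^j
          * (((1 + t*y : ℝ) : ℂ) ^ (b - 1 - 2*(l:ℂ) + j)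
             * (epsH^[l-j] f) (g * Lo (t / (1 + t*y)))) with hSdef
    have hpos : ∀ᶠ t in nhds (0:ℝ), 0 < 1 + t * y := by
      have hc : ContinuousAt (fun t : ℝ => 1 + t * y) 0 := by fun_prop
      have h1 : (0:ℝ) < 1 + 0 * y := by norm_num
      exact hc.eventually (eventually_gt_nhds h1)
    have hEV : (fun t => (epsH^[l] f) ((g * Nn y) * Lo t)) =ᶠ[nhds 0] S := by
      filter_upwards [hpos] with t ht
      have hwne : (1 + t*y) ≠ 0 := ht.ne'
      have hWC : ((1 + t*y : ℝ) : ℂ) ≠ 0 := Complex.ofReal_ne_zero.mpr hwne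
      rw [Matrix.mul_assoc, decomp y t hwne, ← Matrix.mul_assoc, ← Matrix.mul_assoc]
      rw [show Nn (y / (1+t*y)) = !![1, y/(1+t*y); 0, 1] from rfl]
      rw [ih]
      refine Finset.sum_congr rfl fun j hj => ?_
      have hjl : j ≤ l := Nat.lt_succ_iff.mp (Finset.mem_range.mp hj)
      rw [scaleD hf hfP _ _ ht]
      have hcast : ((l - j : ℕ) : ℂ) = (l:ℂ) - j := Nat.cast_sub hjl
      have hyw : ((y / (1+t*y) : ℝ) : ℂ)^j
            * ((1 + t*y : ℝ):ℂ) ^ (b - 1 - 2*(((l-j : ℕ)) :ℂ))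
          = (y:ℂ)^j * ((1 + t*y:ℝ):ℂ) ^ (b - 1 - 2*(l:ℂ) + j) := by
        rw [hcast, Complex.ofReal_div, div_pow,
          show b - 1 - 2*(l:ℂ) + j = (b - 1 - 2*((l:ℂ) - j)) + (-(j:ℂ)) by ring,
          Complex.cpow_add _ _ hWC, Complex.cpow_neg, Complex.cpow_natCast]
        ring
      linear_combination ((l.choose j : ℂ) * poch (b - l) j
        * (epsH^[l-j] f) (g * Lo (t / (1 + t*y)))) * hyw
    have hSD : HasDerivAt S (∑ j ∈ Finset.range (l+1),
        (l.choose j : ℂ) * poch (b - l) j * (y:ℂ)^j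
          * ((b - 1 - 2*(l:ℂ) + j) * y * ((epsH^[l-j] f) g)
             + (epsH^[l-j+1] f) g)) 0 := by
      refine HasDerivAt.fun_sum fun j hj => ?_
      have hP : HasDerivAt (fun t : ℝ => ((1 + t*y : ℝ):ℂ) ^ (b - 1 - 2*(l:ℂ) + j))
          ((b - 1 - 2*(l:ℂ) + j) * y) 0 := by
        have inner : HasDerivAt (fun z : ℂ => 1 + z * (y:ℂ)) (y:ℂ) (0:ℂ) := by
          simpa using ((hasDerivAt_id (0:ℂ)).mul_const (y:ℂ)).const_add 1
        have hslit : ((1:ℂ) + 0 * (y:ℂ)) ∈ Complex.slitPlane := by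
          norm_num [Complex.mem_slitPlane_iff]
        have outer := (inner.cpow_const (c := b - 1 - 2*(l:ℂ) + j) hslit).comp_ofReal
        have hfun : (fun t : ℝ => ((1 + t*y : ℝ):ℂ) ^ (b - 1 - 2*(l:ℂ) + j))
            = fun t : ℝ => ((1:ℂ) + (t:ℂ) * (y:ℂ)) ^ (b - 1 - 2*(l:ℂ) + j) := by
          funext t; push_cast; ring_nf
        rw [hfun]
        convert outer using 1
        simp [Complex.one_cpow]
      have innerR : HasDerivAt (fun t : ℝ => t / (1 + t*y)) 1 0 := by
        have den : HasDerivAt (fun t : ℝ => 1 + t*y) y 0 := by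
          simpa using ((hasDerivAt_id (0:ℝ)).mul_const y).const_add 1
        have := (hasDerivAt_id (0:ℝ)).div den (by norm_num)
        refine this.congr_deriv ?_
        norm_num
      have hG : HasDerivAt (fun t : ℝ => (epsH^[l-j] f) (g * Lo (t / (1 + t*y))))
          ((epsH^[l-j+1] f) g) 0 := by
        have comp := (hasDerivAt_epsH (hfl (l-j)) g 0).scomp_of_eq (x := (0:ℝ)) innerR
          (by norm_num)
        simp only [one_smul, Lo_zero, mul_one] at comp
        rw [show epsH (epsH^[l-j] f) g = (epsH^[l-j+1] f) g from
          (Function.iterate_succ_apply' epsH (l-j) f ▸ rfl)] at comp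
        exact comp
      have := (hP.mul hG).const_mul ((l.choose j : ℂ) * poch (b - l) j * (y:ℂ)^j)
      refine this.congr_deriv ?_
      have : ((1 + 0*y : ℝ):ℂ) ^ (b - 1 - 2*(l:ℂ) + j) = 1 := by
        norm_num
      rw [this]
      simp only [zero_div]
      norm_num [Lo_zero]
    have hL := hasDerivAt_epsH (hfl l) (g * Nn y) 0
    have hD := hL.unique (hSD.congr_of_eventuallyEq hEV)
    rw [Lo_zero, mul_one] at hD
    rw [show (g * !![1, y; 0, 1]) = g * Nn y from rfl, Function.iterate_succ_apply', hD]
    -- now the combinatorial rearrangement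
    push_cast
    rw [show b - ((l:ℂ)+1) = b - l - 1 by ring]
    rw [Finset.sum_range_succ'
      (fun j => (((l+1).choose j : ℕ) : ℂ) * poch (b - l - 1) j * (y:ℂ)^j * (epsH^[l+1-j] f) g)
      (l+1)]
    simp only [mul_add]
    rw [Finset.sum_add_distrib]
    have h2 : (∑ j ∈ Finset.range (l+1),
          (l.choose j : ℂ) * poch (b - l) j * (y:ℂ)^j * (epsH^[l-j+1] f) g)
        = (∑ j ∈ Finset.range (l+1),
            (l.choose (j+1) : ℂ) * poch (b - l) (j+1) * (y:ℂ)^(j+1) * (epsH^[l-j] f) g)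
          + (epsH^[l+1] f) g := by
      rw [Finset.sum_range_succ'
        (fun j => (l.choose j : ℂ) * poch (b - l) j * (y:ℂ)^j * (epsH^[l-j+1] f) g) l]
      rw [Finset.sum_range_succ
        (fun j => (l.choose (j+1) : ℂ) * poch (b - l) (j+1) * (y:ℂ)^(j+1) * (epsH^[l-j] f) g) l]
      simp only [Nat.choose_succ_self, Nat.cast_zero, zero_mul, add_zero, Nat.sub_zero,
        Nat.choose_zero_right, Nat.cast_one, one_mul, poch_zero, pow_zero]
      congr 1
      refine Finset.sum_congr rfl fun j hj => ?_
      have hjl : j < l := Finset.mem_range.mp hj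
      rw [show l - (j+1) + 1 = l - j by omega]
    rw [h2]
    rw [← add_assoc, ← Finset.sum_add_distrib]
    congr 1
    · refine Finset.sum_congr rfl fun j hj => ?_
      have hjl : j ≤ l := Nat.lt_succ_iff.mp (Finset.mem_range.mp hj)
      rw [show l + 1 - (j+1) = l - j by omega]
      push_cast
      linear_combination ((y:ℂ)^j * (y:ℂ) * (epsH^[l-j] f) g) * pascalPoch b l j
    · simp [poch_zero]
end
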